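/- Let X be a k-step nilspace. Then the set Tran(X) of translations of height 1 is a group under composition, and setting Tran_0(X) = Tran_1(X) = Tran(X), the sequence (Tran_i(X))_{i≥0} of translation groups of height i is a filtration of degree at most k: Tran_i(X) ⊇ Tran_j(X) for i ≤ j, [Tran_i(X), Tran_j(X)] ⊆ Tran_{i+j}(X), and Tran_{k+1}(X) is trivial. -/

import Mathlib

open Finset

/-- Embedding of the discrete cube `{0,1}^n` into `ℤ^n`. -/
def cubeEmb {n : ℕ} (v : Fin n → Bool) : Fin n → ℤ := fun i => if v i then 1 else 0

/-- A discrete-cube morphism: the restriction to `{0,1}^m` of an affine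
homomorphism `ℤ^m → ℤ^n`. -/
def IsCubeMorphism {m n : ℕ} (φ : (Fin m → Bool) → (Fin n → Bool)) : Prop :=
  ∃ (M : (Fin m → ℤ) →+ (Fin n → ℤ)) (t : Fin n → ℤ),
    ∀ v : Fin m → Bool, cubeEmb (φ v) = M (cubeEmb v) + t

/-- A face of `{0,1}^n` of codimension `c`: fix `c` coordinates. -/
def IsFaceOfCodim {n : ℕ} (F : Set (Fin n → Bool)) (c : ℕ) : Prop :=
  ∃ (I : Finset (Fin n)) (x : Fin n → Bool), I.card = c ∧
    F = {v : Fin n → Bool | ∀ i ∈ I, v i = x i}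

/-- An `m`-face map into `{0,1}^n`: an injective cube morphism whose image is
an `m`-dimensional face. -/
def IsFaceMap {m n : ℕ} (φ : (Fin m → Bool) → (Fin n → Bool)) : Prop :=
  IsCubeMorphism φ ∧ Function.Injective φ ∧ IsFaceOfCodim (Set.range φ) (n - m)

/-- The number of coordinates of `v` equal to `1`. -/
def weight {n : ℕ} (v : Fin n → Bool) : ℕ := (Finset.univ.filter fun i => v i = true).card

/-- A (pre)filtration on a group: a decreasing chain of subgroups with
`[G_i, G_j] ⊆ G_{i+j}`. -/
def IsFiltration' {G : Type*} [Group G] (Gf : ℕ → Subgroup G) : Prop :=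
  (∀ i, Gf (i + 1) ≤ Gf i) ∧
  (∀ i j : ℕ, ∀ x ∈ Gf i, ∀ y ∈ Gf j, x⁻¹ * y⁻¹ * x * y ∈ Gf (i + j))

open Classical in
/-- The face-group element `g^F`: equal to `g` on `F` and to the identity elsewhere. -/
noncomputable def faceEl {G : Type*} [Group G] {n : ℕ} (F : Set (Fin n → Bool)) (g : G) :
    (Fin n → Bool) → G :=
  fun v => if v ∈ F then g else 1

/-- The Host–Kra cube group `C^n(G_•)`: the subgroup of `G^{{0,1}^n}` generated by
the face groups. -/
noncomputable def hkCubes {G : Type*} [Group G] (Gf : ℕ → Subgroup G) (n : ℕ) :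
    Subgroup ((Fin n → Bool) → G) :=
  Subgroup.closure { f | ∃ (c : ℕ) (F : Set (Fin n → Bool)) (g : G),
    IsFaceOfCodim F c ∧ g ∈ Gf c ∧ f = faceEl F g }

/-- Restriction of a map on `{0,1}^{n+1}` to the lower face `{v : v_j = 0}`,
viewed as a map on `{0,1}^n`. -/
def lowerFaceRestr {X : Type*} {n : ℕ} (q : (Fin (n + 1) → Bool) → X) (j : Fin (n + 1)) :
    (Fin n → Bool) → X :=
  fun v => q (j.insertNth false v)

/-- An `(n+1)`-corner: every restriction to an `n`-face containing `0^{n+1}` is a cube. -/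
def IsNSCorner {X : Type*} (C : ∀ n, ((Fin n → Bool) → X) → Prop) (n : ℕ)
    (q' : (Fin (n + 1) → Bool) → X) : Prop :=
  ∀ j : Fin (n + 1), C n (lowerFaceRestr q' j)

/-- `q` is a completion of the corner `q'`. -/
def IsNSCompletion {X : Type*} (C : ∀ n, ((Fin n → Bool) → X) → Prop) (n : ℕ)
    (q' q : (Fin (n + 1) → Bool) → X) : Prop :=
  C (n + 1) q ∧ ∀ v : Fin (n + 1) → Bool, v ≠ (fun _ => true) → q v = q' v

/-- The nilspace axioms: composition, ergodicity and corner completion. -/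
def IsNilspace {X : Type*} (C : ∀ n, ((Fin n → Bool) → X) → Prop) : Prop :=
  (∀ (m n : ℕ) (φ : (Fin m → Bool) → (Fin n → Bool)), IsCubeMorphism φ →
      ∀ q, C n q → C m (q ∘ φ)) ∧
  (∀ q : (Fin 1 → Bool) → X, C 1 q) ∧
  (∀ n (q' : (Fin (n + 1) → Bool) → X), IsNSCorner C n q' → ∃ q, IsNSCompletion C n q' q)

/-- A `k`-step nilspace: a nilspace in which every `(k+1)`-corner has a unique
completion. -/
def IsKStepNilspace {X : Type*} (C : ∀ n, ((Fin n → Bool) → X) → Prop) (k : ℕ) : Prop :=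
  IsNilspace C ∧
  ∀ q' : (Fin (k + 1) → Bool) → X, IsNSCorner C k q' → ∃! q, IsNSCompletion C k q' q

/-- The Gray-code alternating product `σ_n`. -/
def graySigma {G : Type*} [Group G] : (n : ℕ) → ((Fin n → Bool) → G) → G
  | 0, g => g (fun i => i.elim0)
  | n + 1, g => (graySigma n (fun v => g (Fin.snoc v true)))⁻¹ *
      graySigma n (fun v => g (Fin.snoc v false))

/-- The difference operator `∂_h g (x) = g(x)⁻¹ g(xh)`. -/
def mulDiff {H G : Type*} [Group H] [Group G] (h : H) (g : H → G) : H → G :=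
  fun x => (g x)⁻¹ * g (x * h)

/-- `g : H → G` is a polynomial map adapted to the filtrations `H_•, G_•`. -/
def IsPolyMap {H G : Type*} [Group H] [Group G] (Hf : ℕ → Subgroup H)
    (Gf : ℕ → Subgroup G) (g : H → G) : Prop :=
  ∀ (n : ℕ) (d : Fin n → ℕ) (h : Fin n → H), (∀ j, h j ∈ Hf (d j)) →
    ∀ x : H, ((List.ofFn h).foldr mulDiff g) x ∈ Gf (∑ j, d j)

/-- The `k`-arrow `⟨q_0, q_1⟩_k : {0,1}^{n+k} → X`. -/
def arrowMap {X : Type*} {n k : ℕ} (q0 q1 : (Fin n → Bool) → X) :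
    (Fin (n + k) → Bool) → X :=
  fun v =>
    if ∀ j : Fin k, v (Fin.natAdd n j) = true
    then q1 (fun i => v (Fin.castAdd k i))
    else q0 (fun i => v (Fin.castAdd k i))

open Classical in
/-- `α^F`: apply `α` to the values of `f` on the face `F`, leaving other values
unchanged. -/
noncomputable def faceApply {X : Type*} {n : ℕ} (F : Set (Fin n → Bool)) (α : X → X)
    (f : (Fin n → Bool) → X) : (Fin n → Bool) → X :=
  fun v => if v ∈ F then α (f v) else f v

/-- A translation of height `i`: for every `n ≥ i` and every face `F` of
codimension `i`, the map `α^F` preserves cubes. -/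
def IsTranslation {X : Type*} (C : ∀ n, ((Fin n → Bool) → X) → Prop) (i : ℕ)
    (α : X → X) : Prop :=
  ∀ n : ℕ, i ≤ n → ∀ F : Set (Fin n → Bool), IsFaceOfCodim F i →
    ∀ q, C n q → C n (faceApply F α q)

/-!
Composition and monotonicity in the height are formal, and on a face `F = F₁ ∩ F₂` of
codimension `i + j` the commutator `α'β'αβ` acts as `α'^F₁ β'^F₂ α^F₁ β^F₂`, since off `F₁ ∩ F₂`
each translation meets its inverse. Everything else rests on the uniqueness of
`(k+1)`-corner completions, which says that two cubes of dimension `≥ k + 1` agreeing off the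
top vertex agree there. With `z w` the number of zero coordinates of `w`, comparing the cubes
`w ↦ α^[z w] x` gives injectivity of `α`, completing the corner `w ↦ α^[z w - 1] y` gives a
preimage of `y`, and a translation of height `k + 1` changes a constant `(k+1)`-cube only at
the top vertex, hence fixes every point. For the inverse `β`, pad `q` with `k + 1` extra coordinates:
`w ↦ α^[z w] (β (q w))`, with `z` counting zeros among the extra coordinates, is a cube, and
its restriction to where they are all `true` is `β ∘ q`.
-/

section CubeMorphisms

lemma isCubeMorphism_of_forall_coord {m n : ℕ} (φ : (Fin m → Bool) → Fin n → Bool)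
    (hφ : ∀ j, (∃ i, ∀ v, φ v j = v i) ∨ ∃ b, ∀ v, φ v j = b) : IsCubeMorphism φ := by
  classical
  refine ⟨AddMonoidHom.mk' (fun x j => if h : ∃ i, ∀ v, φ v j = v i then x h.choose else 0)
    (fun x y => by funext j; split_ifs <;> simp [*]), cubeEmb (φ fun _ => false), fun v => ?_⟩
  funext j
  simp only [cubeEmb, AddMonoidHom.mk'_apply, Pi.add_apply]
  by_cases h : ∃ i, ∀ v, φ v j = v i
  · rw [dif_pos h, h.choose_spec, h.choose_spec]
    simp
  · obtain ⟨b, hb⟩ := (hφ j).resolve_left h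
    rw [dif_neg h, hb, hb, zero_add]

lemma isCubeMorphism_comp_right {m n : ℕ} (σ : Fin n → Fin m) :
    IsCubeMorphism fun v : Fin m → Bool => v ∘ σ :=
  isCubeMorphism_of_forall_coord _ fun j => .inl ⟨σ j, fun _ => rfl⟩

lemma isCubeMorphism_const {m n : ℕ} (w : Fin n → Bool) :
    IsCubeMorphism fun _ : Fin m → Bool => w :=
  isCubeMorphism_of_forall_coord _ fun j => .inr ⟨w j, fun _ => rfl⟩

lemma isCubeMorphism_insertNth {n : ℕ} (p : Fin (n + 1)) (b : Bool) :
    IsCubeMorphism fun v : Fin n → Bool => p.insertNth b v :=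
  isCubeMorphism_of_forall_coord _ fun j => by
    induction j using p.succAboveCases with
    | x => exact .inr ⟨b, fun v => Fin.insertNth_apply_same (α := fun _ => Bool) p b v⟩
    | p i => exact .inl ⟨i, fun v => Fin.insertNth_apply_succAbove (α := fun _ => Bool) p b v i⟩

lemma isCubeMorphism_append_const {m n : ℕ} (w : Fin n → Bool) :
    IsCubeMorphism fun v : Fin m → Bool => Fin.append v w :=
  isCubeMorphism_of_forall_coord _ fun j => by
    induction j using Fin.addCases with
    | left i => exact .inl ⟨i, fun v => Fin.append_left v w i⟩
    | right i => exact .inr ⟨w i, fun v => Fin.append_right v w i⟩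

end CubeMorphisms

section Faces

variable {X : Type*} {n : ℕ}

def cubeFace (I : Finset (Fin n)) (x : Fin n → Bool) : Set (Fin n → Bool) :=
  {v | ∀ i ∈ I, v i = x i}

@[simp]
lemma mem_cubeFace {I : Finset (Fin n)} {x v : Fin n → Bool} :
    v ∈ cubeFace I x ↔ ∀ i ∈ I, v i = x i :=
  Iff.rfl

lemma cubeFace_empty (x : Fin n → Bool) : cubeFace ∅ x = Set.univ := by
  ext; simp

lemma cubeFace_union (I J : Finset (Fin n)) (x : Fin n → Bool) :
    cubeFace (I ∪ J) x = cubeFace I x ∩ cubeFace J x := by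
  ext; simp [or_imp, forall_and]

lemma cubeFace_insert (I : Finset (Fin n)) (j : Fin n) (x : Fin n → Bool) :
    cubeFace (insert j I) x = {v | v j = x j} ∩ cubeFace I x := by
  ext; simp

lemma cubeFace_update_of_notMem {I : Finset (Fin n)} {j : Fin n} (hj : j ∉ I)
    (x : Fin n → Bool) (b : Bool) : cubeFace I (Function.update x j b) = cubeFace I x := by
  ext v
  simp only [mem_cubeFace]
  refine forall₂_congr fun i hi => ?_
  rw [Function.update_of_ne (ne_of_mem_of_not_mem hi hj)]

lemma mem_cubeFace_cons_succ {I : Finset (Fin n)} {x : Fin n → Bool} {b : Bool}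
    {v : Fin (n + 1) → Bool} :
    v ∈ cubeFace (insert 0 (I.map (Fin.succEmb n))) (Fin.cons b x) ↔
      v 0 = b ∧ Fin.tail v ∈ cubeFace I x := by
  simp [Fin.tail]

lemma faceApply_id (F : Set (Fin n → Bool)) (q : (Fin n → Bool) → X) :
    faceApply F id q = q := by
  funext v; simp [faceApply]

lemma faceApply_comp (F : Set (Fin n → Bool)) (α β : X → X) (q : (Fin n → Bool) → X) :
    faceApply F (α ∘ β) q = faceApply F α (faceApply F β q) := by
  funext v; by_cases h : v ∈ F <;> simp [faceApply, h]

lemma faceApply_univ (α : X → X) (q : (Fin n → Bool) → X) :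
    faceApply Set.univ α q = α ∘ q := by
  funext v; simp [faceApply]

lemma faceApply_inter_commutator {α β α' β' : X → X} (hα : α' ∘ α = id) (hβ : β' ∘ β = id)
    (F G : Set (Fin n → Bool)) (q : (Fin n → Bool) → X) :
    faceApply (F ∩ G) (α' ∘ β' ∘ α ∘ β) q =
      faceApply F α' (faceApply G β' (faceApply F α (faceApply G β q))) := by
  funext v
  have hα' := congrFun hα
  have hβ' := congrFun hβ
  by_cases hF : v ∈ F <;> by_cases hG : v ∈ G <;> simp_all [faceApply]

end Faces

section Nilspaces

variable {X : Type*} {C : ∀ n, ((Fin n → Bool) → X) → Prop}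

lemma IsNilspace.comp (hC : IsNilspace C) {m n : ℕ} {φ : (Fin m → Bool) → Fin n → Bool}
    (hφ : IsCubeMorphism φ) {q : (Fin n → Bool) → X} (hq : C n q) : C m (q ∘ φ) :=
  hC.1 m n φ hφ q hq

lemma IsNilspace.const (hC : IsNilspace C) (n : ℕ) (x : X) : C n fun _ => x :=
  hC.comp (isCubeMorphism_const fun _ => false) (hC.2.1 fun _ => x)

lemma IsNilspace.isNSCorner (hC : IsNilspace C) {n : ℕ} {q : (Fin (n + 1) → Bool) → X}
    (hq : C (n + 1) q) : IsNSCorner C n q :=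
  fun j => hC.comp (isCubeMorphism_insertNth j false) hq

lemma IsTranslation.cube_faceApply {c : ℕ} {α : X → X} (hα : IsTranslation C c α) {n : ℕ}
    {I : Finset (Fin n)} (hI : #I = c) (x : Fin n → Bool) {q : (Fin n → Bool) → X}
    (hq : C n q) : C n (faceApply (cubeFace I x) α q) :=
  hα n (hI ▸ (card_le_univ I).trans_eq (Fintype.card_fin n)) _ ⟨I, x, hI, rfl⟩ q hq

lemma isTranslation_id (c : ℕ) : IsTranslation C c id := by
  intro n _ F _ q hq
  rwa [faceApply_id]

lemma IsTranslation.comp {c : ℕ} {α β : X → X} (hα : IsTranslation C c α)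
    (hβ : IsTranslation C c β) : IsTranslation C c (α ∘ β) := by
  intro n hn F hF q hq
  rw [faceApply_comp]
  exact hα n hn F hF _ (hβ n hn F hF q hq)

/-- Lift the cube along a new coordinate `0`; the lifted face is the union of two faces of one
codimension more, on which `α` is applied in turn. -/
lemma IsTranslation.of_succ (hC : IsNilspace C) {m : ℕ} {α : X → X}
    (hα : IsTranslation C (m + 1) α) : IsTranslation C m α := by
  rintro n - _ ⟨I, x, rfl, rfl⟩ q hq
  change C n (faceApply (cubeFace I x) α q)
  have hcard : #(insert 0 (I.map (Fin.succEmb n))) = #I + 1 := by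
    rw [card_insert_of_notMem (by simp [Fin.succ_ne_zero]), card_map]
  have hlift := hα.cube_faceApply hcard (Fin.cons false x)
    (hα.cube_faceApply hcard (Fin.cons true x) (hC.comp (isCubeMorphism_comp_right Fin.succ) hq))
  have hfaces : faceApply (cubeFace (insert 0 (I.map (Fin.succEmb n))) (Fin.cons false x)) α
      (faceApply (cubeFace (insert 0 (I.map (Fin.succEmb n))) (Fin.cons true x)) α
        (q ∘ fun v => v ∘ Fin.succ)) = faceApply (cubeFace I x) α q ∘ Fin.tail := by
    funext v
    simp only [faceApply, mem_cubeFace_cons_succ, Function.comp_apply]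
    rcases Bool.eq_false_or_eq_true (v 0) with h | h <;> simp [h, Function.comp_def] <;> rfl
  have hrestr := hC.comp (isCubeMorphism_insertNth 0 false) (hfaces ▸ hlift)
  simpa [Function.comp_def, Fin.insertNth_zero'] using hrestr

lemma IsTranslation.mono (hC : IsNilspace C) {a b : ℕ} (hab : a ≤ b) {α : X → X}
    (hα : IsTranslation C b α) : IsTranslation C a α := by
  induction b, hab using Nat.le_induction with
  | base => exact hα
  | succ b _ ih => exact ih (hα.of_succ hC)

end Nilspaces

section ZeroCount

variable {N : ℕ}

def zeroCount (S : Finset (Fin N)) (w : Fin N → Bool) : ℕ :=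
  #{i ∈ S | w i = false}

lemma zeroCount_insert {S : Finset (Fin N)} {j : Fin N} (hj : j ∉ S) (w : Fin N → Bool) :
    zeroCount (insert j S) w = zeroCount S w + if w j = false then 1 else 0 := by
  unfold zeroCount
  rw [filter_insert]
  split_ifs <;> simp [card_insert_of_notMem, hj]

lemma zeroCount_top (S : Finset (Fin N)) : zeroCount S (fun _ => true) = 0 := by
  simp [zeroCount]

lemma zeroCount_univ_pos {w : Fin N → Bool} (hw : w ≠ fun _ => true) :
    0 < zeroCount univ w := by
  obtain ⟨i, hi⟩ := Function.ne_iff.mp hw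
  exact card_pos.mpr ⟨i, by simpa using hi⟩

lemma zeroCount_insertNth (S : Finset (Fin (N + 1))) (p : Fin (N + 1)) (b : Bool)
    (w : Fin N → Bool) :
    zeroCount S (p.insertNth b w) =
      zeroCount (S.preimage p.succAbove p.succAbove_right_injective.injOn) w +
        if p ∈ S ∧ b = false then 1 else 0 := by
  have hsum : ∀ {M : ℕ} (T : Finset (Fin M)) (u : Fin M → Bool),
      zeroCount T u = ∑ i, if i ∈ T ∧ u i = false then 1 else 0 := by
    intro M T u
    rw [← card_filter, zeroCount]
    congr 1
    ext; simp
  rw [hsum, hsum, Fin.sum_univ_succAbove _ p, add_comm]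
  simp

end ZeroCount

section KStep

variable {X : Type*} {C : ∀ n, ((Fin n → Bool) → X) → Prop} {k : ℕ} {α : X → X}

lemma IsTranslation.cube_iterate_zeroCount (hα : IsTranslation C 1 α) {N : ℕ}
    (S : Finset (Fin N)) {q : (Fin N → Bool) → X} (hq : C N q) :
    C N fun w => α^[zeroCount S w] (q w) := by
  classical
  induction S using Finset.induction_on with
  | empty => simpa [zeroCount] using hq
  | insert j S hj ih =>
    convert hα.cube_faceApply (card_singleton j) (fun _ => false) ih using 1
    funext w
    by_cases hw : w j = false <;>
      simp [faceApply, zeroCount_insert hj, hw, Function.iterate_succ_apply']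

lemma IsTranslation.cube_comp (hC : IsNilspace C) (hα : IsTranslation C 1 α) {n : ℕ}
    {q : (Fin n → Bool) → X} (hq : C n q) : C n (α ∘ q) := by
  simpa [cubeFace_empty, faceApply_univ] using
    (hα.mono hC zero_le_one).cube_faceApply card_empty (fun _ => false) hq

lemma IsKStepNilspace.eq_top_of_eq_off_top (hns : IsKStepNilspace C k) {N : ℕ} (hN : k + 1 ≤ N)
    {q₁ q₂ : (Fin N → Bool) → X} (h₁ : C N q₁) (h₂ : C N q₂)
    (h : ∀ w, w ≠ (fun _ => true) → q₁ w = q₂ w) : q₁ (fun _ => true) = q₂ (fun _ => true) := by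
  induction N, hN using Nat.le_induction with
  | base =>
    have hcorner := hns.1.isNSCorner h₁
    have hunique := (hns.2 q₁ hcorner).unique (y₁ := q₁) (y₂ := q₂) ⟨h₁, fun _ _ => rfl⟩
      ⟨h₂, fun w hw => (h w hw).symm⟩
    exact congrFun hunique _
  | succ N _ ih =>
    have hcons : (Fin.cons true fun _ => true : Fin (N + 1) → Bool) = fun _ => true := by
      funext i
      exact Fin.cases rfl (fun _ => rfl) i
    have := ih (hns.1.comp (isCubeMorphism_insertNth 0 true) h₁)
      (hns.1.comp (isCubeMorphism_insertNth 0 true) h₂) fun w hw => h _ fun hcw => by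
        simp only [Fin.insertNth_zero', ← hcons] at hcw
        exact hw (Fin.cons_injective2 hcw).2
    simpa [Fin.insertNth_zero', hcons] using this

lemma IsKStepNilspace.apply_top_eq (hns : IsKStepNilspace C k) (hα : IsTranslation C 1 α)
    {N : ℕ} (hN : k + 1 ≤ N) (S : Finset (Fin N)) {R Q : (Fin N → Bool) → X} (hR : C N R)
    (hQ : C N Q) (h : ∀ w, w ≠ (fun _ => true) → α (R w) = α^[zeroCount S w] (Q w)) :
    α (R fun _ => true) = Q fun _ => true := by
  simpa [zeroCount_top] using
    hns.eq_top_of_eq_off_top hN (hα.cube_comp hns.1 hR) (hα.cube_iterate_zeroCount S hQ) h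

lemma IsTranslation.bijective (hns : IsKStepNilspace C k) (hα : IsTranslation C 1 α) :
    Function.Bijective α := by
  have hiter (x : X) : C (k + 1) fun w => α^[zeroCount univ w] x :=
    hα.cube_iterate_zeroCount univ (hns.1.const _ x)
  have hpred {w : Fin (k + 1) → Bool} (hw : w ≠ fun _ => true) (x : X) :
      α^[zeroCount univ w] x = α^[zeroCount univ w - 1] (α x) :=
    (congrFun (Function.iterate_pred_comp_of_pos α (zeroCount_univ_pos hw)) x).symm
  constructor
  · intro a b hab
    simpa [zeroCount_top] using hns.eq_top_of_eq_off_top le_rfl (hiter a) (hiter b)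
      fun w hw => by rw [hpred hw, hpred hw, hab]
  · intro y
    have hcorner : IsNSCorner C k fun w => α^[zeroCount univ w - 1] y := by
      intro j
      convert hα.cube_iterate_zeroCount univ (hns.1.const k y) using 1
      funext v
      simp [lowerFaceRestr, zeroCount_insertNth]
    obtain ⟨R, hR, hRcorner⟩ := hns.1.2.2 k _ hcorner
    exact ⟨R fun _ => true, hns.apply_top_eq hα le_rfl univ hR (hns.1.const _ y) fun w hw => by
      rw [hRcorner w hw]
      exact congrFun (Function.comp_iterate_pred_of_pos α (zeroCount_univ_pos hw)) y⟩

end KStep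

lemma card_preimage_succAbove_of_notMem {N : ℕ} {S : Finset (Fin (N + 1))} {p : Fin (N + 1)}
    (hp : p ∉ S) : #(S.preimage p.succAbove p.succAbove_right_injective.injOn) = #S := by
  rw [card_preimage, filter_true_of_mem]
  intro i hi
  exact Fin.exists_succAbove_eq (ne_of_mem_of_not_mem hi hp)

section Inverse

variable {X : Type*} {C : ∀ n, ((Fin n → Bool) → X) → Prop} {k : ℕ} {α β : X → X}

/-- Complete the corner at the top vertex: lower faces in `S` are iterates on `Q`, the others
are the same construction one dimension lower, and `apply_top_eq` identifies the missing
value. -/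
lemma IsKStepNilspace.cube_iterate_zeroCount_inv (hns : IsKStepNilspace C k)
    (hα : IsTranslation C 1 α) (hαβ : α ∘ β = id) (hβα : β ∘ α = id) {N : ℕ}
    (S : Finset (Fin N)) (hS : k + 1 ≤ #S) {Q : (Fin N → Bool) → X} (hQ : C N Q) :
    C N fun w => α^[zeroCount S w] (β (Q w)) := by
  have hαβ' : ∀ z, α (β z) = z := congrFun hαβ
  have hβα' : ∀ z, β (α z) = z := congrFun hβα
  induction N with
  | zero => exact absurd ((card_le_univ S).trans_eq (Fintype.card_fin 0)) (by omega)
  | succ N ih =>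
    let S' (p : Fin (N + 1)) := S.preimage p.succAbove p.succAbove_right_injective.injOn
    have hcorner : IsNSCorner C N fun w => α^[zeroCount S w] (β (Q w)) := by
      intro p
      have hQp := hns.1.comp (isCubeMorphism_insertNth p false) hQ
      by_cases hp : p ∈ S
      · convert hα.cube_iterate_zeroCount (S' p) hQp using 1
        funext w
        simp [S', lowerFaceRestr, zeroCount_insertNth, hp, Function.iterate_succ_apply, hαβ']
      · have hS' := card_preimage_succAbove_of_notMem hp
        convert ih (S' p) (hS.trans hS'.ge) hQp using 1
        funext w
        simp [S', lowerFaceRestr, zeroCount_insertNth, hp]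
    obtain ⟨R, hR, hRcorner⟩ := hns.1.2.2 N _ hcorner
    have hN : k + 1 ≤ N + 1 := hS.trans ((card_le_univ S).trans_eq (Fintype.card_fin _))
    have htop := hns.apply_top_eq hα hN S hR hQ fun w hw => by
      rw [hRcorner w hw, ← Function.Commute.iterate_self α, hαβ']
    convert hR using 1
    funext w
    by_cases hw : w = fun _ => true
    · subst hw
      rw [← htop, hβα', zeroCount_top, Function.iterate_zero_apply]
    · exact (hRcorner w hw).symm

lemma IsKStepNilspace.cube_comp_inv (hns : IsKStepNilspace C k) (hα : IsTranslation C 1 α)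
    (hαβ : α ∘ β = id) (hβα : β ∘ α = id) {n : ℕ} {q : (Fin n → Bool) → X} (hq : C n q) :
    C n (β ∘ q) := by
  have hpad := hns.cube_iterate_zeroCount_inv hα hαβ hβα (univ.map (Fin.natAddEmb n))
    (by simp) (hns.1.comp (isCubeMorphism_comp_right (Fin.castAdd (k + 1))) hq)
  convert hns.1.comp (isCubeMorphism_append_const fun _ => true) hpad using 1
  funext v
  simp [zeroCount, filter_map, Function.comp_def]

lemma IsKStepNilspace.cube_faceApply_inv (hns : IsKStepNilspace C k) (hα1 : IsTranslation C 1 α)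
    (hαβ : α ∘ β = id) (hβα : β ∘ α = id) {n : ℕ} (I : Finset (Fin n))
    (hα : IsTranslation C #I α) (x : Fin n → Bool) {q : (Fin n → Bool) → X} (hq : C n q) :
    C n (faceApply (cubeFace I x) β q) := by
  classical
  have hαβ' : ∀ z, α (β z) = z := congrFun hαβ
  induction I using Finset.induction_on with
  | empty =>
    rw [cubeFace_empty, faceApply_univ]
    exact hns.cube_comp_inv hα1 hαβ hβα hq
  | insert j I hj ih =>
    rw [card_insert_of_notMem hj] at hα
    have hcube := hα.cube_faceApply (card_insert_of_notMem hj) (Function.update x j !x j)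
      (ih (hα.of_succ hns.1))
    convert hcube using 1
    rw [cubeFace_insert, cubeFace_insert, cubeFace_update_of_notMem hj]
    funext v
    by_cases hI : v ∈ cubeFace I x <;> by_cases hvj : v j = x j <;>
      simp [faceApply, hI, hvj, hαβ']

lemma IsTranslation.of_inverse (hns : IsKStepNilspace C k) {m : ℕ} (hm : 1 ≤ m)
    (hα : IsTranslation C m α) (hαβ : α ∘ β = id) (hβα : β ∘ α = id) :
    IsTranslation C m β := by
  rintro n - _ ⟨I, x, rfl, rfl⟩ q hq
  exact hns.cube_faceApply_inv (hα.mono hns.1 hm) hαβ hβα I hα x hq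

end Inverse

lemma exists_subsets_card_eq_union_eq {ι : Type*} [DecidableEq ι] (I : Finset ι) {a b : ℕ}
    (ha : a ≤ #I) (hb : b ≤ #I) (hab : #I ≤ a + b) :
    ∃ I₁ I₂ : Finset ι, #I₁ = a ∧ #I₂ = b ∧ I₁ ∪ I₂ = I := by
  obtain ⟨I₁, h₁I, h₁⟩ := exists_subset_card_eq ha
  obtain ⟨I₂, hsub, h₂I, h₂⟩ := exists_subsuperset_card_eq sdiff_subset
    (by rw [card_sdiff_of_subset h₁I]; omega) hb
  refine ⟨I₁, I₂, h₁, h₂, subset_antisymm (union_subset h₁I h₂I) fun i hi => ?_⟩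
  by_cases h : i ∈ I₁
  · exact mem_union_left _ h
  · exact mem_union_right _ (hsub (mem_sdiff.mpr ⟨hi, h⟩))

section Commutators

variable {X : Type*} {C : ∀ n, ((Fin n → Bool) → X) → Prop}

lemma IsTranslation.commutator {a b c : ℕ} (hac : a ≤ c) (hbc : b ≤ c) (hcab : c ≤ a + b)
    {α α' β β' : X → X} (hα : IsTranslation C a α) (hα' : IsTranslation C a α')
    (hβ : IsTranslation C b β) (hβ' : IsTranslation C b β') (hα'α : α' ∘ α = id)
    (hβ'β : β' ∘ β = id) : IsTranslation C c (α' ∘ β' ∘ α ∘ β) := by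
  classical
  rintro n - _ ⟨I, x, rfl, rfl⟩ q hq
  obtain ⟨I₁, I₂, h₁, h₂, rfl⟩ := exists_subsets_card_eq_union_eq I hac hbc hcab
  change C n (faceApply (cubeFace (I₁ ∪ I₂) x) _ q)
  rw [cubeFace_union, faceApply_inter_commutator hα'α hβ'β]
  exact hα'.cube_faceApply h₁ x <| hβ'.cube_faceApply h₂ x <| hα.cube_faceApply h₁ x <|
    hβ.cube_faceApply h₂ x hq

end Commutators

lemma IsTranslation.eq_id {X : Type*} {C : ∀ n, ((Fin n → Bool) → X) → Prop} {k : ℕ}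
    {α : X → X} (hns : IsKStepNilspace C k) (hα : IsTranslation C (k + 1) α) : α = id := by
  funext y
  have htop : ∀ w : Fin (k + 1) → Bool, w ∈ cubeFace univ (fun _ => true) ↔ w = fun _ => true :=
    fun w => by simp [funext_iff]
  have h := hns.eq_top_of_eq_off_top le_rfl
    (hα.cube_faceApply (card_univ.trans (Fintype.card_fin _)) (fun _ => true) (hns.1.const _ y))
    (hns.1.const _ y) fun w hw => if_neg (mt (htop w).mp hw)
  exact (if_pos ((htop _).mpr rfl)).symm.trans h

theorem stmt17 {X : Type*} (C : ∀ n, ((Fin n → Bool) → X) → Prop) (k : ℕ)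
    (hns : IsKStepNilspace C k) :
    IsTranslation C 1 (id : X → X) ∧
    (∀ (i : ℕ) (α β : X → X), IsTranslation C (max 1 i) α →
        IsTranslation C (max 1 i) β → IsTranslation C (max 1 i) (α ∘ β)) ∧
    (∀ (i : ℕ) (α : X → X), IsTranslation C (max 1 i) α →
        ∃ β : X → X, IsTranslation C (max 1 i) β ∧ α ∘ β = id ∧ β ∘ α = id) ∧
    (∀ i j : ℕ, i ≤ j → ∀ α : X → X,
        IsTranslation C (max 1 j) α → IsTranslation C (max 1 i) α) ∧
    (∀ (i j : ℕ) (α β α' β' : X → X), IsTranslation C (max 1 i) α →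
        IsTranslation C (max 1 j) β →
        α ∘ α' = id → α' ∘ α = id → β ∘ β' = id → β' ∘ β = id →
        IsTranslation C (max 1 (i + j)) (α' ∘ β' ∘ α ∘ β)) ∧
    (∀ α : X → X, IsTranslation C (k + 1) α → α = id) := by
  have inverse {i : ℕ} {α β : X → X} (hα : IsTranslation C (max 1 i) α) (hαβ : α ∘ β = id)
      (hβα : β ∘ α = id) : IsTranslation C (max 1 i) β :=
    hα.of_inverse hns (le_max_left 1 i) hαβ hβα
  refine ⟨isTranslation_id 1, fun i α β hα hβ => hα.comp hβ, fun i α hα => ?_,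
    fun i j hij α hα => hα.mono hns.1 (max_le_max le_rfl hij), ?_,
    fun α hα => hα.eq_id hns⟩
  · obtain ⟨β, hβα, hαβ⟩ := Function.bijective_iff_has_inverse.mp
      ((hα.mono hns.1 (le_max_left 1 i)).bijective hns)
    exact ⟨β, inverse hα hαβ.comp_eq_id hβα.comp_eq_id, hαβ.comp_eq_id, hβα.comp_eq_id⟩
  · intro i j α β α' β' hα hβ hαα' hα'α hββ' hβ'β
    exact IsTranslation.commutator (by omega) (by omega) (by omega) hα (inverse hα hαα' hα'α)
      hβ (inverse hβ hββ' hβ'β) hα'α hβ'β
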